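/- arXiv:2412.06289 — 4 statements merged into one kernel-verified Lean document; each statement's English description precedes it below -/
import Mathlib

section
/- Let C ∈ ℝ^{q×m}, D ∈ ℝ^{m×p} be matrices. Every solution pair (U,V) with U ∈ ℝ^{m×r}, V ∈ ℝ^{p×r} minimizing ‖C U Vᵀ − M‖_F over matrices of the form C U Vᵀ, where M ∈ ℝ^{q×p}, satisfies C U Vᵀ = C C† SVD_r(C C† M) + terms annihilated by C; consequently the minimum value equals ‖SVD_r(C C† M) − C C† M‖_F² + ‖(I − C C†) M‖_F². -/
open Matrix Module

/-- Frobenius norm of a real matrix. -/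
noncomputable def frobNorm {m n : Type*} [Fintype m] [Fintype n]
    (M : Matrix m n ℝ) : ℝ :=
  Real.sqrt (∑ i, ∑ j, (M i j) ^ 2)

/-- `B` is the Moore–Penrose pseudoinverse of `A`. -/
def IsMP {m n : Type*} [Fintype m] [Fintype n] [DecidableEq m] [DecidableEq n]
    (A : Matrix m n ℝ) (B : Matrix n m ℝ) : Prop :=
  A * B * A = A ∧ B * A * B = B ∧ (A * B)ᵀ = A * B ∧ (B * A)ᵀ = B * A

noncomputable section LoraAux

/-- Sum of squares of entries. -/
def fsq {q p : ℕ} (X : Matrix (Fin q) (Fin p) ℝ) : ℝ := ∑ i, ∑ j, (X i j) ^ 2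

lemma fsq_nonneg {q p : ℕ} (X : Matrix (Fin q) (Fin p) ℝ) : 0 ≤ fsq X :=
  Finset.sum_nonneg fun _ _ => Finset.sum_nonneg fun _ _ => sq_nonneg _

lemma frobNorm_sq {q p : ℕ} (X : Matrix (Fin q) (Fin p) ℝ) :
    frobNorm X ^ 2 = fsq X := Real.sq_sqrt (fsq_nonneg X)

lemma frobNorm_le_of_fsq {q p : ℕ} {A B : Matrix (Fin q) (Fin p) ℝ}
    (h : fsq A ≤ fsq B) : frobNorm A ≤ frobNorm B := Real.sqrt_le_sqrt h

lemma fsq_le_of_frobNorm {q p : ℕ} {A B : Matrix (Fin q) (Fin p) ℝ}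
    (h : frobNorm A ≤ frobNorm B) : fsq A ≤ fsq B := by
  rw [← frobNorm_sq, ← frobNorm_sq]
  exact pow_le_pow_left₀ (Real.sqrt_nonneg _) h 2

lemma fsq_neg {q p : ℕ} (A : Matrix (Fin q) (Fin p) ℝ) : fsq (-A) = fsq A := by
  simp [fsq]

lemma fsq_sub_comm {q p : ℕ} (A B : Matrix (Fin q) (Fin p) ℝ) :
    fsq (A - B) = fsq (B - A) := by
  rw [← fsq_neg (A - B), neg_sub]

lemma fsq_eq_trace {q p : ℕ} (X : Matrix (Fin q) (Fin p) ℝ) :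
    fsq X = Matrix.trace (Xᵀ * X) := by
  unfold fsq Matrix.trace
  rw [Finset.sum_comm]
  refine Finset.sum_congr rfl fun j _ => ?_
  simp [Matrix.mul_apply, Matrix.diag, sq]

/-- Pythagoras for an orthogonal projection. -/
lemma pyth {q p : ℕ} (P : Matrix (Fin q) (Fin q) ℝ) (hPt : Pᵀ = P) (hP2 : P * P = P)
    (X : Matrix (Fin q) (Fin p) ℝ) :
    fsq X = fsq (P * X) + fsq ((1 - P) * X) := by
  have hQt : (1 - P)ᵀ = 1 - P := by rw [transpose_sub, transpose_one, hPt]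
  have hQ2 : (1 - P) * (1 - P) = 1 - P := by
    rw [Matrix.mul_sub, Matrix.mul_one, Matrix.sub_mul, Matrix.one_mul, hP2]
    abel
  have h1 : (P * X)ᵀ * (P * X) = Xᵀ * (P * X) := by
    rw [transpose_mul, hPt, Matrix.mul_assoc, ← Matrix.mul_assoc P P X, hP2]
  have h2 : ((1 - P) * X)ᵀ * ((1 - P) * X) = Xᵀ * ((1 - P) * X) := by
    rw [transpose_mul, hQt, Matrix.mul_assoc, ← Matrix.mul_assoc (1 - P) (1 - P) X, hQ2]
  have hsum : P * X + (1 - P) * X = X := by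
    rw [← Matrix.add_mul]
    have : P + (1 - P) = 1 := by abel
    rw [this, Matrix.one_mul]
  rw [fsq_eq_trace, fsq_eq_trace, fsq_eq_trace, h1, h2, ← Matrix.trace_add, ← Matrix.mul_add,
    hsum]

lemma key {q p : ℕ} (P : Matrix (Fin q) (Fin q) ℝ) (hPt : Pᵀ = P) (hP2 : P * P = P)
    (M A : Matrix (Fin q) (Fin p) ℝ) (hA : P * A = A) :
    fsq (A - M) = fsq (A - P * M) + fsq ((1 - P) * M) := by
  rw [pyth P hPt hP2 (A - M)]
  congr 1
  · rw [Matrix.mul_sub, hA]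
  · have : (1 - P) * (A - M) = -((1 - P) * M) := by
      rw [Matrix.mul_sub, Matrix.sub_mul, Matrix.one_mul, hA, sub_self, zero_sub]
    rw [this, fsq_neg]

/-- exact rank factorization -/
lemma exists_fact {q p : ℕ} (B : Matrix (Fin q) (Fin p) ℝ) :
    ∃ X : Matrix (Fin q) (Fin B.rank) ℝ, ∃ Y : Matrix (Fin p) (Fin B.rank) ℝ, B = X * Yᵀ := by
  set W := LinearMap.range B.mulVecLin with hW
  have hr : finrank ℝ W = B.rank := rfl
  let b : Basis (Fin B.rank) ℝ W := finBasisOfFinrankEq ℝ W hr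
  have hmem : ∀ j : Fin p, B.mulVec (Pi.single j 1) ∈ W := by
    intro j; exact ⟨Pi.single j 1, rfl⟩
  refine ⟨Matrix.of (fun i k => (b k : Fin q → ℝ) i),
    Matrix.of (fun j k => b.repr ⟨B.mulVec (Pi.single j 1), hmem j⟩ k), ?_⟩
  ext i j
  have hs := b.sum_repr ⟨B.mulVec (Pi.single j 1), hmem j⟩
  have := congrArg (fun w : W => (w : Fin q → ℝ) i) hs
  simp only [Submodule.coe_sum, Submodule.coe_smul, Finset.sum_apply, Pi.smul_apply,
    smul_eq_mul] at this
  simp only [Matrix.mul_apply, transpose_apply, Matrix.of_apply]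
  rw [show ∀ (f : Fin B.rank → ℝ) (g : Fin B.rank → ℝ),
    (∑ k, f k * g k) = ∑ k, g k * f k from fun f g => by simp [mul_comm]]
  rw [this]
  simp [Matrix.mulVec_single]

lemma exists_fact_le {q p r : ℕ} (B : Matrix (Fin q) (Fin p) ℝ) (hB : B.rank ≤ r) :
    ∃ X : Matrix (Fin q) (Fin r) ℝ, ∃ Y : Matrix (Fin p) (Fin r) ℝ, B = X * Yᵀ := by
  obtain ⟨X0, Y0, h⟩ := exists_fact B
  let E : Matrix (Fin r) (Fin B.rank) ℝ := Matrix.of fun k l => if (k : ℕ) = (l : ℕ) then 1 else 0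
  have hE : Eᵀ * E = 1 := by
    ext l l'
    simp only [Matrix.mul_apply, transpose_apply, Matrix.of_apply, E]
    rw [Finset.sum_eq_single (Fin.castLE hB l)]
    · by_cases h' : l = l'
      · simp [h', Matrix.one_apply]
      · have : ¬ ((l:ℕ) = (l':ℕ)) := fun hh => h' (Fin.ext hh)
        simp [Matrix.one_apply, h', this]
    · intro k _ hk
      have : ¬ ((k : ℕ) = (l : ℕ)) := fun hh => hk (by simp [Fin.ext_iff, hh])
      simp [this]
    · simp
  refine ⟨X0 * Eᵀ, Y0 * Eᵀ, ?_⟩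
  rw [transpose_mul, transpose_transpose, ← Matrix.mul_assoc, Matrix.mul_assoc X0 Eᵀ E, hE,
    Matrix.mul_one]
  exact h

end LoraAux

/-- Any minimizer `(U, V)` of `‖C U Vᵀ − M‖_F` satisfies `C U Vᵀ = SVD_r(C C† M)`
(for some best rank-`r` Frobenius approximation `SVD_r(C C† M)`), and the minimum value
satisfies `‖C U Vᵀ − M‖_F² = ‖SVD_r(C C† M) − C C† M‖_F² + ‖(I − C C†) M‖_F²`. -/
theorem lora_minimizer_structure (q m p r : ℕ)
    (C : Matrix (Fin q) (Fin m) ℝ) (D : Matrix (Fin m) (Fin p) ℝ)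
    (M : Matrix (Fin q) (Fin p) ℝ)
    (Cd : Matrix (Fin m) (Fin q) ℝ) (hCd : IsMP C Cd)
    (U : Matrix (Fin m) (Fin r) ℝ) (V : Matrix (Fin p) (Fin r) ℝ)
    (hmin : ∀ (U' : Matrix (Fin m) (Fin r) ℝ) (V' : Matrix (Fin p) (Fin r) ℝ),
      frobNorm (C * U * Vᵀ - M) ≤ frobNorm (C * U' * V'ᵀ - M)) :
    (∃ S : Matrix (Fin q) (Fin p) ℝ, S.rank ≤ r ∧
      (∀ B : Matrix (Fin q) (Fin p) ℝ, B.rank ≤ r →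
        frobNorm (C * Cd * M - S) ≤ frobNorm (C * Cd * M - B)) ∧
      C * U * Vᵀ = C * Cd * S) ∧
    (∀ S : Matrix (Fin q) (Fin p) ℝ, S.rank ≤ r →
      (∀ B : Matrix (Fin q) (Fin p) ℝ, B.rank ≤ r →
        frobNorm (C * Cd * M - S) ≤ frobNorm (C * Cd * M - B)) →
      frobNorm (C * U * Vᵀ - M) ^ 2
        = frobNorm (S - C * Cd * M) ^ 2 + frobNorm ((1 - C * Cd) * M) ^ 2) := by
  obtain ⟨hC1, hC2, hPt, hCt2⟩ := hCd
  set P := C * Cd with hPdef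
  have hP2 : P * P = P := by
    rw [hPdef, ← Matrix.mul_assoc, hC1]
  set S := C * U * Vᵀ with hSdef
  have hPS : P * S = S := by
    rw [hPdef, hSdef, ← Matrix.mul_assoc, ← Matrix.mul_assoc, hC1]
  have hSrank : S.rank ≤ r := by
    calc S.rank ≤ Vᵀ.rank := Matrix.rank_mul_le_right (C * U) Vᵀ
    _ ≤ Fintype.card (Fin r) := Matrix.rank_le_card_height Vᵀ
    _ = r := Fintype.card_fin r
  -- the minimality property of S over rank ≤ r matrices
  have hSmin : ∀ B : Matrix (Fin q) (Fin p) ℝ, B.rank ≤ r →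
      frobNorm (P * M - S) ≤ frobNorm (P * M - B) := by
    intro B hB
    obtain ⟨X, Y, hXY⟩ := exists_fact_le B hB
    have hPB : P * (P * B) = P * B := by rw [← Matrix.mul_assoc, hP2]
    have hform : C * (Cd * X) * Yᵀ = P * B := by
      rw [hXY, hPdef, ← Matrix.mul_assoc, Matrix.mul_assoc (C * Cd) X Yᵀ]
    have h0 : fsq (S - M) ≤ fsq (P * B - M) := by
      have := hmin (Cd * X) Y
      rw [hform] at this
      exact fsq_le_of_frobNorm this
    have e1 : fsq (S - M) = fsq (S - P * M) + fsq ((1 - P) * M) :=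
      key P hPt hP2 M S hPS
    have e2 : fsq (P * B - M) = fsq (P * B - P * M) + fsq ((1 - P) * M) :=
      key P hPt hP2 M (P * B) hPB
    have e3 : fsq (P * B - P * M) ≤ fsq (B - P * M) := by
      have := pyth P hPt hP2 (B - P * M)
      have hproj : P * (B - P * M) = P * B - P * M := by
        rw [Matrix.mul_sub, ← Matrix.mul_assoc, hP2]
      rw [hproj] at this
      nlinarith [fsq_nonneg ((1 - P) * (B - P * M))]
    apply frobNorm_le_of_fsq
    rw [fsq_sub_comm (P * M) S, fsq_sub_comm (P * M) B]
    nlinarith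
  refine ⟨⟨S, hSrank, hSmin, hPS.symm⟩, ?_⟩
  intro S' hS'rank hS'min
  have h1 : frobNorm (P * M - S) ≤ frobNorm (P * M - S') := hSmin S' hS'rank
  have h2 : frobNorm (P * M - S') ≤ frobNorm (P * M - S) := hS'min S hSrank
  have heq : fsq (S - P * M) = fsq (S' - P * M) := by
    have h3 := le_antisymm h1 h2
    rw [fsq_sub_comm S (P * M), fsq_sub_comm S' (P * M), ← frobNorm_sq, ← frobNorm_sq, h3]
  rw [frobNorm_sq, frobNorm_sq, frobNorm_sq, key P hPt hP2 M S hPS, heq]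
end

section
/- Let M ∈ ℝ^{q×p} have singular values λ_1 ≥ … and suppose λ_s(M) > λ_{s+1}(M). Then for any B with ‖B − M‖_op ≤ λ_s(M) − λ_{s+1}(M) small enough (in particular ‖B − M‖_op ≤ ‖M‖_op), one has ‖SVD_s(B) − SVD_s(M)‖_F ≤ √s ‖B − M‖_op + ‖Φ_s(B)Φ_s(B)ᵀ − Φ_s(M)Φ_s(M)ᵀ‖_F ‖M‖_op, where Φ_s(·) denotes top-s left singular vectors. -/
open Matrix

/-- Operator (spectral) norm of a real matrix. -/
noncomputable def matOpNorm {m n : ℕ} (M : Matrix (Fin m) (Fin n) ℝ) : ℝ :=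
  ‖LinearMap.toContinuousLinearMap (Matrix.toEuclideanLin M)‖

lemma matOpNorm_nonneg {m n : ℕ} (M : Matrix (Fin m) (Fin n) ℝ) : 0 ≤ matOpNorm M :=
  norm_nonneg _

lemma mulVec_norm_le {m n : ℕ} (M : Matrix (Fin m) (Fin n) ℝ) (x : Fin n → ℝ) :
    Real.sqrt (∑ i, ((M *ᵥ x) i) ^ 2) ≤ matOpNorm M * Real.sqrt (∑ j, (x j) ^ 2) := by
  have h := (LinearMap.toContinuousLinearMap (Matrix.toEuclideanLin M)).le_opNorm
      ((WithLp.equiv 2 (Fin n → ℝ)).symm x)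
  simpa [matOpNorm, EuclideanSpace.norm_eq, Real.norm_eq_abs, sq_abs] using h

lemma matOpNorm_transpose {m n : ℕ} (M : Matrix (Fin m) (Fin n) ℝ) :
    matOpNorm Mᵀ = matOpNorm M := by
  unfold matOpNorm
  rw [← Matrix.conjTranspose_eq_transpose_of_trivial,
    Matrix.toEuclideanLin_conjTranspose_eq_adjoint,
    LinearMap.adjoint_toContinuousLinearMap]
  exact LinearIsometryEquiv.norm_map ContinuousLinearMap.adjoint _

lemma mulVecT_sq_le {q p : ℕ} (X : Matrix (Fin q) (Fin p) ℝ) (v : Fin q → ℝ) :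
    ∑ j, ((Xᵀ *ᵥ v) j) ^ 2 ≤ matOpNorm X ^ 2 * ∑ l, (v l) ^ 2 := by
  have h := mulVec_norm_le Xᵀ v
  rw [matOpNorm_transpose] at h
  have hA : (0:ℝ) ≤ ∑ j, ((Xᵀ *ᵥ v) j) ^ 2 := by positivity
  calc ∑ j, ((Xᵀ *ᵥ v) j) ^ 2
      = Real.sqrt (∑ j, ((Xᵀ *ᵥ v) j) ^ 2) ^ 2 := (Real.sq_sqrt hA).symm
    _ ≤ (matOpNorm X * Real.sqrt (∑ l, (v l) ^ 2)) ^ 2 := by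
        apply pow_le_pow_left₀ (Real.sqrt_nonneg _) h
    _ = matOpNorm X ^ 2 * ∑ l, (v l) ^ 2 := by
        rw [mul_pow, Real.sq_sqrt (by positivity)]

lemma frob_mul_le {a q p : ℕ} (Q : Matrix (Fin a) (Fin q) ℝ) (X : Matrix (Fin q) (Fin p) ℝ) :
    frobNorm (Q * X) ≤ frobNorm Q * matOpNorm X := by
  have key : ∀ i, ∑ j, ((Q * X) i j) ^ 2 ≤ matOpNorm X ^ 2 * ∑ l, (Q i l) ^ 2 := by
    intro i
    have h := mulVecT_sq_le X (fun l => Q i l)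
    have e : ∀ j, (Q * X) i j = (Xᵀ *ᵥ fun l => Q i l) j := by
      intro j
      simp [Matrix.mul_apply, Matrix.mulVec, dotProduct, Matrix.transpose_apply, mul_comm]
    simpa [e] using h
  unfold frobNorm
  calc Real.sqrt (∑ i, ∑ j, ((Q * X) i j) ^ 2)
      ≤ Real.sqrt (∑ i, matOpNorm X ^ 2 * ∑ l, (Q i l) ^ 2) :=
        Real.sqrt_le_sqrt (Finset.sum_le_sum fun i _ => key i)
    _ = Real.sqrt (matOpNorm X ^ 2 * ∑ i, ∑ l, (Q i l) ^ 2) := by rw [← Finset.mul_sum]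
    _ = matOpNorm X * Real.sqrt (∑ i, ∑ l, (Q i l) ^ 2) := by
        rw [Real.sqrt_mul (by positivity), Real.sqrt_sq (matOpNorm_nonneg X)]
    _ = Real.sqrt (∑ i, ∑ l, (Q i l) ^ 2) * matOpNorm X := mul_comm _ _

lemma frobSq_eq_trace {a b : Type*} [Fintype a] [Fintype b] (A : Matrix a b ℝ) :
    ∑ i, ∑ j, (A i j) ^ 2 = Matrix.trace (Aᵀ * A) := by
  rw [Matrix.trace]
  simp only [Matrix.diag, Matrix.mul_apply, Matrix.transpose_apply, ← sq]
  exact Finset.sum_comm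

lemma frob_orth_left {q k p : Type*} [Fintype q] [Fintype k] [Fintype p] [DecidableEq k]
    (Φ : Matrix q k ℝ) (hΦ : Φᵀ * Φ = 1) (Y : Matrix k p ℝ) :
    frobNorm (Φ * Y) = frobNorm Y := by
  unfold frobNorm
  congr 1
  rw [frobSq_eq_trace, frobSq_eq_trace, Matrix.transpose_mul, Matrix.mul_assoc,
    ← Matrix.mul_assoc Φᵀ, hΦ, Matrix.one_mul]

lemma frobNorm_add_le {m n : Type*} [Fintype m] [Fintype n] (X Y : Matrix m n ℝ) :
    frobNorm (X + Y) ≤ frobNorm X + frobNorm Y := by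
  have he : ∀ A : Matrix m n ℝ,
      frobNorm A = ‖((WithLp.equiv 2 ((m × n) → ℝ)).symm (fun ij => A ij.1 ij.2) :
        EuclideanSpace ℝ (m × n))‖ := by
    intro A
    rw [EuclideanSpace.norm_eq]
    unfold frobNorm
    congr 1
    rw [Fintype.sum_prod_type]
    simp [Real.norm_eq_abs, sq_abs]
  rw [he, he, he]
  have : ((WithLp.equiv 2 ((m × n) → ℝ)).symm (fun ij => (X + Y) ij.1 ij.2) :
      EuclideanSpace ℝ (m × n)) =
      (WithLp.equiv 2 ((m × n) → ℝ)).symm (fun ij => X ij.1 ij.2)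
      + (WithLp.equiv 2 ((m × n) → ℝ)).symm (fun ij => Y ij.1 ij.2) := by
    ext ij
    simp [Matrix.add_apply]
  rw [this]
  exact norm_add_le _ _

lemma bound1 {q k p s : ℕ} (hsk : s ≤ k)
    (Φ : Matrix (Fin q) (Fin k) ℝ) (hΦ : Φᵀ * Φ = 1) (X : Matrix (Fin q) (Fin p) ℝ) :
    frobNorm (Φ * Matrix.diagonal (fun i : Fin k => if (i : ℕ) < s then (1:ℝ) else 0) * Φᵀ * X)
      ≤ Real.sqrt s * matOpNorm X := by
  set D1 : Matrix (Fin k) (Fin k) ℝ :=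
    Matrix.diagonal (fun i : Fin k => if (i : ℕ) < s then (1:ℝ) else 0) with hD1
  rw [Matrix.mul_assoc (Φ * D1), Matrix.mul_assoc Φ D1, frob_orth_left Φ hΦ]
  set C := Φᵀ * X with hC
  have hCrow : ∀ i, ∑ j, (C i j) ^ 2 ≤ matOpNorm X ^ 2 := by
    intro i
    have h := mulVecT_sq_le X (fun l => Φ l i)
    have hcol : ∑ l, (Φ l i) ^ 2 = 1 := by
      have h1 := congrFun (congrFun hΦ i) i
      simpa [Matrix.mul_apply, Matrix.one_apply, sq, Matrix.transpose_apply] using h1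
    rw [hcol, mul_one] at h
    have e : ∀ j, C i j = (Xᵀ *ᵥ fun l => Φ l i) j := by
      intro j
      simp [hC, Matrix.mul_apply, Matrix.mulVec, dotProduct, Matrix.transpose_apply, mul_comm]
    simpa [e] using h
  unfold frobNorm
  have hrow : ∀ i : Fin k, ∑ j, ((D1 * C) i j) ^ 2
      ≤ (if (i : ℕ) < s then matOpNorm X ^ 2 else 0) := by
    intro i
    have hentry : ∀ j, (D1 * C) i j = (if (i : ℕ) < s then (1:ℝ) else 0) * C i j := by
      intro j; simp [hD1, Matrix.diagonal_mul]
    by_cases h : (i : ℕ) < s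
    · simp only [hentry, h, if_true, one_mul]
      exact hCrow i
    · simp [hentry, h]
  have hsum : ∑ i : Fin k, (if (i : ℕ) < s then matOpNorm X ^ 2 else 0)
      = (s : ℝ) * matOpNorm X ^ 2 := by
    have hfilter : (Finset.range k).filter (fun i => i < s) = Finset.range s := by
      ext i; simp; omega
    rw [Fin.sum_univ_eq_sum_range (fun i => if i < s then matOpNorm X ^ 2 else 0) k,
      ← Finset.sum_filter, hfilter, Finset.sum_const, Finset.card_range, nsmul_eq_mul]
  calc Real.sqrt (∑ i, ∑ j, ((D1 * C) i j) ^ 2)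
      ≤ Real.sqrt ((s : ℝ) * matOpNorm X ^ 2) := by
        apply Real.sqrt_le_sqrt
        rw [← hsum]
        exact Finset.sum_le_sum fun i _ => hrow i
    _ = Real.sqrt s * matOpNorm X := by
        rw [Real.sqrt_mul (by positivity), Real.sqrt_sq (matOpNorm_nonneg X)]

/-- Triangle-inequality step of the SVD perturbation bound: given SVDs of `M` and `B`
(singular values in decreasing order) with `λ_s(M) > λ_{s+1}(M)` and `‖B − M‖_op ≤ ‖M‖_op`,
`‖SVD_s(B) − SVD_s(M)‖_F ≤ √s ‖B − M‖_op + ‖Φ_s(B)Φ_s(B)ᵀ − Φ_s(M)Φ_s(M)ᵀ‖_F ‖M‖_op`. -/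
theorem svd_truncation_perturbation (q p k s : ℕ) (hs1 : 1 ≤ s) (hsk : s < k)
    (M B : Matrix (Fin q) (Fin p) ℝ)
    (ΦM ΦB : Matrix (Fin q) (Fin k) ℝ) (ΨM ΨB : Matrix (Fin p) (Fin k) ℝ)
    (lamM lamB : Fin k → ℝ)
    (hΦM : ΦMᵀ * ΦM = 1) (hΨM : ΨMᵀ * ΨM = 1)
    (hΦB : ΦBᵀ * ΦB = 1) (hΨB : ΨBᵀ * ΨB = 1)
    (hmonoM : Antitone lamM) (hmonoB : Antitone lamB)
    (hnnM : ∀ i, 0 ≤ lamM i) (hnnB : ∀ i, 0 ≤ lamB i)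
    (hM : M = ΦM * Matrix.diagonal lamM * ΨMᵀ)
    (hB : B = ΦB * Matrix.diagonal lamB * ΨBᵀ)
    (hgap : lamM ⟨s, hsk⟩ < lamM ⟨s - 1, by omega⟩)
    (hnear : matOpNorm (B - M) ≤ matOpNorm M) :
    frobNorm (ΦB * Matrix.diagonal (fun i : Fin k => if (i : ℕ) < s then lamB i else 0) * ΨBᵀ
        - ΦM * Matrix.diagonal (fun i : Fin k => if (i : ℕ) < s then lamM i else 0) * ΨMᵀ)
      ≤ Real.sqrt s * matOpNorm (B - M)
        + frobNorm (ΦB * Matrix.diagonal (fun i : Fin k => if (i : ℕ) < s then (1 : ℝ) else 0) * ΦBᵀ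
            - ΦM * Matrix.diagonal (fun i : Fin k => if (i : ℕ) < s then (1 : ℝ) else 0) * ΦMᵀ)
          * matOpNorm M := by
  have hDmul : ∀ lam : Fin k → ℝ,
      Matrix.diagonal (fun i : Fin k => if (i : ℕ) < s then (1:ℝ) else 0) * Matrix.diagonal lam
        = Matrix.diagonal (fun i : Fin k => if (i : ℕ) < s then lam i else 0) := by
    intro lam
    rw [Matrix.diagonal_mul_diagonal]
    congr 1; funext i; by_cases h : (i : ℕ) < s <;> simp [h]
  have key : ∀ (Φ : Matrix (Fin q) (Fin k) ℝ) (Ψ : Matrix (Fin p) (Fin k) ℝ) (lam : Fin k → ℝ),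
      Φᵀ * Φ = 1 →
      Φ * Matrix.diagonal (fun i : Fin k => if (i : ℕ) < s then lam i else 0) * Ψᵀ
        = (Φ * Matrix.diagonal (fun i : Fin k => if (i : ℕ) < s then (1:ℝ) else 0) * Φᵀ)
          * (Φ * Matrix.diagonal lam * Ψᵀ) := by
    intro Φ Ψ lam hΦ
    simp only [Matrix.mul_assoc]
    rw [← Matrix.mul_assoc Φᵀ Φ, hΦ, Matrix.one_mul,
      ← Matrix.mul_assoc (Matrix.diagonal _), hDmul]
  rw [key ΦB ΨB lamB hΦB, key ΦM ΨM lamM hΦM, ← hB, ← hM]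
  set D1 : Matrix (Fin k) (Fin k) ℝ :=
    Matrix.diagonal (fun i : Fin k => if (i : ℕ) < s then (1:ℝ) else 0) with hD1
  set PB := ΦB * D1 * ΦBᵀ with hPB
  set PM := ΦM * D1 * ΦMᵀ with hPM
  have hsplit : PB * B - PM * M = PB * (B - M) + (PB - PM) * M := by
    rw [Matrix.mul_sub, Matrix.sub_mul]; abel
  rw [hsplit]
  refine le_trans (frobNorm_add_le _ _) (add_le_add ?_ ?_)
  · exact bound1 hsk.le ΦB hΦB (B - M)
  · exact frob_mul_le _ _
end

section
/- Under the approximate sparsity assumption — there exist S₀ ⊆ [m] with |S₀| ≤ s and δ > 0 such that Σ_{a∉S₀} ‖e_aᵀ C† D Σ^{1/2}‖² ≤ δ² ‖C† D Σ^{1/2}‖_F² — and choosing S ⊇ S₀, the following holds for U_S = [e_{a}]_{a∈S}: ‖Φ''_S Φ''_Sᵀ D Σ Wᵀ A† − Φ' Φ'ᵀ D Σ Wᵀ A†‖_F² ≤ δ² κ*²(C) ‖D Σ^{1/2}‖_F², where Φ' spans the column space of C, Φ''_S spans the column space of C U_S, A = (WΣWᵀ)^{1/2}, and κ*(C) is the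 ratio of the largest to smallest positive singular value of C. -/
/-!
Let `P = Φ'Φ'ᵀ` and `Q = Φ''Φ''ᵀ` be the orthogonal projections onto the column spaces of `C` and
of `C U_S`; then `P = CC†` and `QP = Q`. Write `DΣWᵀA† = XR` with `X = DΣ^{1/2}`,
`R = Σ^{1/2}WᵀA†`, and put `M = C†X`. The rows of `M` indexed by `S` contribute `C U_S U_Sᵀ M`,
which `Q` fixes, so `(P - Q) DΣWᵀA† = (1 - Q) C M₂ R`, where `M₂` keeps only the rows of `M`
outside `S`. Both `1 - Q` and `R` are contractions (`RᵀR = AA†` is a projection), hence the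
squared Frobenius norm is at most `‖C‖² ‖M₂‖_F² ≤ ‖C‖² δ² ‖M‖_F²` since `S ⊇ S₀`, and
`‖M‖_F ≤ ‖X‖_F / σ_min` because `C†` inverts `C` on the range of `Cᵀ`.
-/

open Matrix

open scoped ComplexOrder in
/-- The positive semidefinite square root of a positive semidefinite matrix
(the definition `Matrix.PosSemidef.sqrt` of the older Mathlib, removed since). -/
noncomputable def Matrix.PosSemidef.sqrt {n : Type*} [Fintype n] [DecidableEq n]
    {𝕜 : Type*} [RCLike 𝕜] {A : Matrix n n 𝕜} (hA : A.PosSemidef) : Matrix n n 𝕜 :=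
  hA.1.eigenvectorUnitary.1 * diagonal (fun i => ((Real.sqrt (hA.1.eigenvalues i) : ℝ) : 𝕜))
  * (star hA.1.eigenvectorUnitary : Matrix n n 𝕜)

namespace Matrix.PosSemidef

variable {n : Type*} [Fintype n] [DecidableEq n] {A : Matrix n n ℝ}

theorem sqrt_isSymm (hA : A.PosSemidef) : hA.sqrt.IsSymm := by
  rw [IsSymm, ← conjTranspose_eq_transpose_of_trivial, PosSemidef.sqrt]
  simp only [conjTranspose_mul, diagonal_conjTranspose, star_eq_conjTranspose,
    conjTranspose_conjTranspose, Matrix.mul_assoc, star_trivial]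

theorem sqrt_mul_self (hA : A.PosSemidef) : hA.sqrt * hA.sqrt = A := by
  set U : Matrix n n ℝ := hA.1.eigenvectorUnitary.1
  have hU : ∀ X : Matrix n n ℝ, star U * (U * X) = X := fun X => by
    rw [← Matrix.mul_assoc, Unitary.coe_star_mul_self, Matrix.one_mul]
  conv_rhs => rw [hA.1.spectral_theorem, Unitary.conjStarAlgAut_apply]
  simp only [PosSemidef.sqrt, Matrix.mul_assoc, hU, U]
  rw [← Matrix.mul_assoc (diagonal _), diagonal_mul_diagonal]
  congr 3
  ext i
  simp [Real.mul_self_sqrt (hA.eigenvalues_nonneg i)]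

end Matrix.PosSemidef

section Frobenius

variable {l m n : Type*} [Fintype l] [Fintype m] [Fintype n]

theorem frobNorm_sq_s12 (M : Matrix m n ℝ) : frobNorm M ^ 2 = ∑ i, ∑ j, M i j ^ 2 :=
  Real.sq_sqrt (by positivity)

theorem frobNorm_transpose (M : Matrix m n ℝ) : frobNorm Mᵀ = frobNorm M := by
  rw [frobNorm, frobNorm, Finset.sum_comm]
  rfl

theorem frobNorm_neg (M : Matrix m n ℝ) : frobNorm (-M) = frobNorm M := by
  simp [frobNorm]

theorem frobNorm_mul_sq_le_of_mulVec {A : Matrix l m ℝ} {c : ℝ}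
    (hA : ∀ v, ∑ i, (A *ᵥ v) i ^ 2 ≤ c * ∑ i, v i ^ 2) (B : Matrix m n ℝ) :
    frobNorm (A * B) ^ 2 ≤ c * frobNorm B ^ 2 := by
  rw [frobNorm_sq_s12, frobNorm_sq_s12, Finset.sum_comm, Finset.sum_comm (γ := m), Finset.mul_sum]
  refine Finset.sum_le_sum fun j _ => ?_
  simpa [mulVec, mul_apply, dotProduct] using hA (fun i => B i j)

theorem frobNorm_mul_sq_le_of_vecMul {R : Matrix m n ℝ} {c : ℝ}
    (hR : ∀ v, ∑ i, (v ᵥ* R) i ^ 2 ≤ c * ∑ i, v i ^ 2) (B : Matrix l m ℝ) :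
    frobNorm (B * R) ^ 2 ≤ c * frobNorm B ^ 2 := by
  rw [← frobNorm_transpose, transpose_mul, ← frobNorm_transpose B]
  exact frobNorm_mul_sq_le_of_mulVec (fun v => by rw [mulVec_transpose]; exact hR v) Bᵀ

end Frobenius

section Contraction

variable {m n : Type*} [Fintype m] [Fintype n]

theorem sum_sq_eq_dotProduct (v : n → ℝ) : ∑ i, v i ^ 2 = v ⬝ᵥ v := by
  simp [dotProduct, sq]

theorem dotProduct_self_nonneg (v : n → ℝ) : 0 ≤ v ⬝ᵥ v := by
  rw [← sum_sq_eq_dotProduct]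
  positivity

theorem dotProduct_sq_le (v w : n → ℝ) : (v ⬝ᵥ w) ^ 2 ≤ (v ⬝ᵥ v) * (w ⬝ᵥ w) := by
  simpa [dotProduct, sq] using Finset.sum_mul_sq_le_sq_mul_sq Finset.univ v w

theorem dotProduct_mulVec_self_of_isSymm_of_isIdempotentElem {P : Matrix n n ℝ} (hPs : P.IsSymm)
    (hPi : IsIdempotentElem P) (v : n → ℝ) : (P *ᵥ v) ⬝ᵥ (P *ᵥ v) = (P *ᵥ v) ⬝ᵥ v := by
  rw [dotProduct_mulVec, ← mulVec_transpose, hPs, mulVec_mulVec, hPi.eq]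

theorem sum_sq_mulVec_le_of_isSymm_of_isIdempotentElem {P : Matrix n n ℝ} (hPs : P.IsSymm)
    (hPi : IsIdempotentElem P) (v : n → ℝ) : ∑ i, (P *ᵥ v) i ^ 2 ≤ ∑ i, v i ^ 2 := by
  rw [sum_sq_eq_dotProduct, sum_sq_eq_dotProduct]
  have hcs := dotProduct_sq_le (P *ᵥ v) v
  rw [← dotProduct_mulVec_self_of_isSymm_of_isIdempotentElem hPs hPi] at hcs
  nlinarith [dotProduct_self_nonneg (P *ᵥ v), dotProduct_self_nonneg v]

theorem sum_sq_mulVec_le_of_isIdempotentElem_transpose_mul {R : Matrix m n ℝ}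
    (hR : IsIdempotentElem (Rᵀ * R)) (v : n → ℝ) : ∑ i, (R *ᵥ v) i ^ 2 ≤ ∑ i, v i ^ 2 := by
  have hPs : (Rᵀ * R).IsSymm := by rw [IsSymm, transpose_mul, transpose_transpose]
  have hgram : (R *ᵥ v) ⬝ᵥ (R *ᵥ v) = ((Rᵀ * R) *ᵥ v) ⬝ᵥ ((Rᵀ * R) *ᵥ v) := by
    rw [dotProduct_mulVec_self_of_isSymm_of_isIdempotentElem hPs hR, dotProduct_mulVec,
      ← mulVec_transpose, mulVec_mulVec]
  rw [sum_sq_eq_dotProduct, hgram, ← sum_sq_eq_dotProduct]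
  exact sum_sq_mulVec_le_of_isSymm_of_isIdempotentElem hPs hR v

theorem sum_sq_vecMul_le_of_mulVec {R : Matrix m n ℝ}
    (hR : ∀ v, ∑ i, (R *ᵥ v) i ^ 2 ≤ ∑ i, v i ^ 2) (v : m → ℝ) :
    ∑ i, (v ᵥ* R) i ^ 2 ≤ ∑ i, v i ^ 2 := by
  set w := v ᵥ* R
  have hw : w ⬝ᵥ w = v ⬝ᵥ (R *ᵥ w) := (dotProduct_mulVec v R w).symm
  have hcs := dotProduct_sq_le v (R *ᵥ w)
  have hRw := hR w
  rw [sum_sq_eq_dotProduct, sum_sq_eq_dotProduct] at hRw ⊢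
  nlinarith [dotProduct_self_nonneg w, dotProduct_self_nonneg v]

end Contraction

section Range

variable {R : Type*} [CommRing R] {l m n : Type*} [Fintype m] [Fintype n]

theorem range_mulVecLin_mul_le (A : Matrix l m R) (B : Matrix m n R) :
    LinearMap.range (A * B).mulVecLin ≤ LinearMap.range A.mulVecLin := by
  rw [mulVecLin_mul]
  exact LinearMap.range_comp_le_range _ _

theorem range_mulVecLin_mul_eq_of_mul_mul_eq [Fintype l] {A : Matrix l m R} {B : Matrix m l R}
    (h : A * B * A = A) : LinearMap.range (A * B).mulVecLin = LinearMap.range A.mulVecLin := by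
  refine le_antisymm (range_mulVecLin_mul_le A B) ?_
  calc LinearMap.range A.mulVecLin = LinearMap.range (A * B * A).mulVecLin := by rw [h]
    _ ≤ LinearMap.range (A * B).mulVecLin := range_mulVecLin_mul_le _ _

theorem mul_eq_of_range_le [Fintype l] {P : Matrix l l R} (hP : IsIdempotentElem P)
    {A : Matrix l m R}
    (h : LinearMap.range A.mulVecLin ≤ LinearMap.range P.mulVecLin) : P * A = A := by
  refine ext_iff_mulVec.mpr fun v => ?_
  obtain ⟨w, hw⟩ := h ⟨v, rfl⟩
  simp only [mulVecLin_apply] at hw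
  rw [← mulVec_mulVec, ← hw, mulVec_mulVec, hP.eq]

theorem eq_of_range_eq_of_isSymm [Fintype l] {P Q : Matrix l l R} (hPs : P.IsSymm)
    (hPi : IsIdempotentElem P) (hQs : Q.IsSymm) (hQi : IsIdempotentElem Q)
    (h : LinearMap.range P.mulVecLin = LinearMap.range Q.mulVecLin) : P = Q := by
  have hQP : Q * P = P := mul_eq_of_range_le hQi h.le
  calc P = (Q * P)ᵀ := by rw [hQP, hPs.eq]
    _ = P * Q := by rw [transpose_mul, hPs.eq, hQs.eq]
    _ = Q := mul_eq_of_range_le hPi h.ge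

end Range

theorem isSymm_mul_transpose {R : Type*} [CommSemiring R] {q t : Type*} [Fintype t]
    (Φ : Matrix q t R) : (Φ * Φᵀ).IsSymm := by
  rw [IsSymm, transpose_mul, transpose_transpose]

section Isometry

variable {q t : Type*} [Fintype q] [Fintype t] [DecidableEq t] {Φ : Matrix q t ℝ}

theorem isIdempotentElem_mul_transpose (hΦ : Φᵀ * Φ = 1) : IsIdempotentElem (Φ * Φᵀ) := by
  rw [IsIdempotentElem, Matrix.mul_assoc, ← Matrix.mul_assoc Φᵀ, hΦ, Matrix.one_mul]

theorem range_mulVecLin_mul_transpose (hΦ : Φᵀ * Φ = 1) :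
    LinearMap.range (Φ * Φᵀ).mulVecLin = LinearMap.range Φ.mulVecLin :=
  range_mulVecLin_mul_eq_of_mul_mul_eq (by rw [Matrix.mul_assoc, hΦ, Matrix.mul_one])

end Isometry

namespace IsMP

variable {m n : Type*} [Fintype m] [Fintype n] [DecidableEq m] [DecidableEq n]
  {A : Matrix m n ℝ} {B : Matrix n m ℝ}

theorem isIdempotentElem_mul (h : IsMP A B) : IsIdempotentElem (A * B) := by
  rw [IsIdempotentElem, ← Matrix.mul_assoc, h.1]

theorem isSymm_mul (h : IsMP A B) : (A * B).IsSymm := h.2.2.1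

theorem eq_mul_of_range_eq {P : Matrix m m ℝ} (h : IsMP A B) (hPs : P.IsSymm)
    (hPi : IsIdempotentElem P) (hP : LinearMap.range P.mulVecLin = LinearMap.range A.mulVecLin) :
    P = A * B :=
  eq_of_range_eq_of_isSymm hPs hPi h.isSymm_mul h.isIdempotentElem_mul
    (hP.trans (range_mulVecLin_mul_eq_of_mul_mul_eq h.1).symm)

end IsMP

theorem sum_sq_mulVec_le_matOpNorm {q m : ℕ} (C : Matrix (Fin q) (Fin m) ℝ) (v : Fin m → ℝ) :
    ∑ i, (C *ᵥ v) i ^ 2 ≤ matOpNorm C ^ 2 * ∑ i, v i ^ 2 := by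
  have h := (LinearMap.toContinuousLinearMap (toEuclideanLin C)).le_opNorm (WithLp.toLp 2 v)
  have h2 := pow_le_pow_left₀ (norm_nonneg _) h 2
  rw [mul_pow, EuclideanSpace.real_norm_sq_eq, EuclideanSpace.real_norm_sq_eq] at h2
  simpa [matOpNorm] using h2

theorem IsMP.sum_sq_mulVec_le {q m : Type*} [Fintype q] [Fintype m] [DecidableEq q]
    [DecidableEq m] {C : Matrix q m ℝ} {Cd : Matrix m q ℝ} (h : IsMP C Cd) {σ : ℝ} (hσ : 0 < σ)
    (hC : ∀ u : q → ℝ, σ * √(∑ i, (Cᵀ *ᵥ u) i ^ 2) ≤ √(∑ i, (C *ᵥ (Cᵀ *ᵥ u)) i ^ 2))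
    (x : q → ℝ) : ∑ i, (Cd *ᵥ x) i ^ 2 ≤ σ⁻¹ ^ 2 * ∑ i, x i ^ 2 := by
  set z := Cd *ᵥ x
  have hz : Cᵀ *ᵥ (Cdᵀ *ᵥ z) = z := by
    rw [mulVec_mulVec, ← transpose_mul, h.2.2.2]
    simp only [z, mulVec_mulVec, h.2.1]
  have hCz : ∑ i, (C *ᵥ z) i ^ 2 ≤ ∑ i, x i ^ 2 := by
    rw [mulVec_mulVec]
    exact sum_sq_mulVec_le_of_isSymm_of_isIdempotentElem h.isSymm_mul h.isIdempotentElem_mul x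
  have key : σ * √(∑ i, z i ^ 2) ≤ √(∑ i, x i ^ 2) :=
    (hz ▸ hC (Cdᵀ *ᵥ z)).trans (Real.sqrt_le_sqrt hCz)
  have key2 := mul_self_le_mul_self (by positivity) key
  rw [inv_pow, inv_mul_eq_div, le_div_iff₀ (by positivity)]
  nlinarith [Real.mul_self_sqrt (by positivity : (0 : ℝ) ≤ ∑ i, z i ^ 2),
    Real.mul_self_sqrt (by positivity : (0 : ℝ) ≤ ∑ i, x i ^ 2)]

theorem isIdempotentElem_gram_of_sqrt {k p : Type*} [Fintype k] [Fintype p] [DecidableEq k]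
    [DecidableEq p] {Sg : Matrix p p ℝ} (hS : Sg.PosSemidef) (W : Matrix k p ℝ)
    (hWSW : (W * Sg * Wᵀ).PosSemidef) {Ad : Matrix k k ℝ} (hAd : IsMP hWSW.sqrt Ad) :
    IsIdempotentElem ((hS.sqrt * Wᵀ * Ad)ᵀ * (hS.sqrt * Wᵀ * Ad)) := by
  have hgram : (hS.sqrt * Wᵀ * Ad)ᵀ * (hS.sqrt * Wᵀ * Ad) =
      (hWSW.sqrt * Ad)ᵀ * (hWSW.sqrt * Ad) := by
    simp only [transpose_mul, hS.sqrt_isSymm.eq, hWSW.sqrt_isSymm.eq, transpose_transpose,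
      Matrix.mul_assoc]
    rw [← Matrix.mul_assoc hWSW.sqrt hWSW.sqrt, hWSW.sqrt_mul_self,
      ← Matrix.mul_assoc hS.sqrt hS.sqrt, hS.sqrt_mul_self]
    simp only [Matrix.mul_assoc]
  rw [hgram, hAd.isSymm_mul.eq, hAd.isIdempotentElem_mul.eq]
  exact hAd.isIdempotentElem_mul

section Selection

variable {m p : Type*} [Fintype m] [DecidableEq m]

def coordSelection (S : Finset m) : Matrix m S ℝ :=
  of fun i j => if i = j.1 then 1 else 0

theorem coordSelection_mul_transpose_mul_apply (S : Finset m) (M : Matrix m p ℝ) (a : m)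
    (j : p) : (coordSelection S * ((coordSelection S)ᵀ * M)) a j = if a ∈ S then M a j else 0 := by
  simp only [coordSelection, mul_apply, transpose_apply, of_apply, ite_mul, one_mul, zero_mul,
    Finset.sum_ite_eq', Finset.mem_univ, if_true]
  rw [Finset.sum_coe_sort S (fun x => if a = x then M x j else 0), Finset.sum_ite_eq]

theorem frobNorm_sub_coordSelection_mul_sq [Fintype p] (S : Finset m) (M : Matrix m p ℝ) :
    frobNorm (M - coordSelection S * ((coordSelection S)ᵀ * M)) ^ 2 =
      ∑ a ∈ Sᶜ, ∑ j, M a j ^ 2 := by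
  have hrows : ∀ a, ∑ j, (M - coordSelection S * ((coordSelection S)ᵀ * M)) a j ^ 2 =
      if a ∈ S then 0 else ∑ j, M a j ^ 2 := fun a => by
    split_ifs with ha <;> simp [coordSelection_mul_transpose_mul_apply, ha]
  rw [frobNorm_sq_s12, Fintype.sum_congr _ _ hrows, Finset.sum_ite, Finset.sum_const_zero, zero_add]
  congr 1
  ext
  simp

end Selection

theorem frobNorm_one_sub_mul_mul_mul_sq_le {q m : ℕ} {p k : Type*} [Fintype p] [Fintype k]
    {Q : Matrix (Fin q) (Fin q) ℝ} (hQs : Q.IsSymm) (hQi : IsIdempotentElem Q)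
    (C : Matrix (Fin q) (Fin m) ℝ) (M : Matrix (Fin m) p ℝ) {R : Matrix p k ℝ}
    (hR : IsIdempotentElem (Rᵀ * R)) :
    frobNorm ((1 - Q) * (C * M) * R) ^ 2 ≤ matOpNorm C ^ 2 * frobNorm M ^ 2 := by
  have hRv : ∀ v, ∑ i, (v ᵥ* R) i ^ 2 ≤ 1 * ∑ i, v i ^ 2 := fun v => by
    rw [one_mul]
    exact sum_sq_vecMul_le_of_mulVec (sum_sq_mulVec_le_of_isIdempotentElem_transpose_mul hR) v
  have hQv : ∀ v, ∑ i, ((1 - Q) *ᵥ v) i ^ 2 ≤ 1 * ∑ i, v i ^ 2 := fun v => by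
    rw [one_mul]
    exact sum_sq_mulVec_le_of_isSymm_of_isIdempotentElem (isSymm_one.sub hQs) hQi.one_sub v
  calc frobNorm ((1 - Q) * (C * M) * R) ^ 2 ≤ 1 * (1 * frobNorm (C * M) ^ 2) :=
        (frobNorm_mul_sq_le_of_vecMul hRv _).trans
          (by gcongr; exact frobNorm_mul_sq_le_of_mulVec hQv _)
    _ ≤ 1 * (1 * (matOpNorm C ^ 2 * frobNorm M ^ 2)) := by
        gcongr
        exact frobNorm_mul_sq_le_of_mulVec (sum_sq_mulVec_le_matOpNorm C) M
    _ = matOpNorm C ^ 2 * frobNorm M ^ 2 := by ring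

theorem proj_sub_proj_mul_eq {q m r t₁ t₂ p : Type*} [Fintype q] [Fintype m] [Fintype r]
    [Fintype t₁] [Fintype t₂] [DecidableEq q] [DecidableEq m] [DecidableEq t₁] [DecidableEq t₂]
    {C : Matrix q m ℝ} {Cd : Matrix m q ℝ} (hCd : IsMP C Cd) (U : Matrix m r ℝ)
    {Φ : Matrix q t₁ ℝ} {Ψ : Matrix q t₂ ℝ} (hΦ : Φᵀ * Φ = 1) (hΨ : Ψᵀ * Ψ = 1)
    (hrΦ : LinearMap.range Φ.mulVecLin = LinearMap.range C.mulVecLin)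
    (hrΨ : LinearMap.range Ψ.mulVecLin = LinearMap.range (C * U).mulVecLin) (Y : Matrix q p ℝ) :
    Φ * Φᵀ * Y - Ψ * Ψᵀ * Y = (1 - Ψ * Ψᵀ) * (C * (Cd * Y - U * (Uᵀ * (Cd * Y)))) := by
  have hP : Φ * Φᵀ = C * Cd := hCd.eq_mul_of_range_eq (isSymm_mul_transpose Φ)
    (isIdempotentElem_mul_transpose hΦ) ((range_mulVecLin_mul_transpose hΦ).trans hrΦ)
  have hrQ := (range_mulVecLin_mul_transpose hΨ).trans hrΨ
  have hPQ : C * Cd * (Ψ * Ψᵀ) = Ψ * Ψᵀ := by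
    refine mul_eq_of_range_le hCd.isIdempotentElem_mul ?_
    rw [hrQ, range_mulVecLin_mul_eq_of_mul_mul_eq hCd.1]
    exact range_mulVecLin_mul_le C U
  have hQP : Ψ * Ψᵀ * (C * Cd) = Ψ * Ψᵀ := by
    simpa only [transpose_mul, (isSymm_mul_transpose Ψ).eq, hCd.isSymm_mul.eq]
      using congrArg transpose hPQ
  have hQCU : Ψ * Ψᵀ * (C * U) = C * U :=
    mul_eq_of_range_le (isIdempotentElem_mul_transpose hΨ) hrQ.ge
  calc Φ * Φᵀ * Y - Ψ * Ψᵀ * Y = C * (Cd * Y) - Ψ * Ψᵀ * (C * (Cd * Y)) := by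
        rw [hP]
        nth_rewrite 1 [← hQP]
        simp only [Matrix.mul_assoc]
    _ = (1 - Ψ * Ψᵀ) * (C * (Cd * Y - U * (Uᵀ * (Cd * Y)))) := by
        have hQCUY : Ψ * Ψᵀ * (C * (U * (Uᵀ * (Cd * Y)))) = C * (U * (Uᵀ * (Cd * Y))) := by
          rw [← Matrix.mul_assoc C, ← Matrix.mul_assoc, hQCU]
        rw [Matrix.sub_mul, Matrix.one_mul, Matrix.mul_sub, Matrix.mul_sub, hQCUY]
        abel

theorem sparse_bias_bound_general (q m k p : ℕ)
    (C : Matrix (Fin q) (Fin m) ℝ) (Cd : Matrix (Fin m) (Fin q) ℝ) (hCd : IsMP C Cd)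
    (D : Matrix (Fin q) (Fin p) ℝ) (W : Matrix (Fin k) (Fin p) ℝ)
    (Sg : Matrix (Fin p) (Fin p) ℝ) (hS : Sg.PosSemidef)
    (hWSW : (W * Sg * Wᵀ).PosSemidef)
    (Ad : Matrix (Fin k) (Fin k) ℝ) (hAd : IsMP hWSW.sqrt Ad)
    (S0 Sset : Finset (Fin m)) (hsub : S0 ⊆ Sset)
    (δ : ℝ)
    (hsparse : ∑ a ∈ S0ᶜ, ∑ j, ((Cd * D * hS.sqrt) a j) ^ 2
        ≤ δ ^ 2 * frobNorm (Cd * D * hS.sqrt) ^ 2)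
    (US : Matrix (Fin m) {a // a ∈ Sset} ℝ)
    (hUS : US = Matrix.of fun i (j : {a // a ∈ Sset}) => if i = j.1 then (1 : ℝ) else 0)
    (t1 t2 : ℕ)
    (Φ'' : Matrix (Fin q) (Fin t1) ℝ) (Φ' : Matrix (Fin q) (Fin t2) ℝ)
    (hΦ'' : Φ''ᵀ * Φ'' = 1) (hΦ' : Φ'ᵀ * Φ' = 1)
    (hr'' : LinearMap.range Φ''.mulVecLin = LinearMap.range (C * US).mulVecLin)
    (hr' : LinearMap.range Φ'.mulVecLin = LinearMap.range C.mulVecLin)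
    (σmin : ℝ) (hσpos : 0 < σmin)
    (hσ : ∀ u : Fin q → ℝ,
      σmin * Real.sqrt (∑ i, (Cᵀ.mulVec u) i ^ 2)
        ≤ Real.sqrt (∑ i, (C.mulVec (Cᵀ.mulVec u)) i ^ 2)) :
    frobNorm (Φ'' * Φ''ᵀ * (D * Sg * Wᵀ * Ad) - Φ' * Φ'ᵀ * (D * Sg * Wᵀ * Ad)) ^ 2
      ≤ δ ^ 2 * (matOpNorm C / σmin) ^ 2 * frobNorm (D * hS.sqrt) ^ 2 := by
  obtain rfl : US = coordSelection Sset := hUS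
  set X := D * hS.sqrt
  set M := Cd * X
  have hZ : D * Sg * Wᵀ * Ad = X * (hS.sqrt * Wᵀ * Ad) := by
    simp only [X, ← hS.sqrt_mul_self, Matrix.mul_assoc]
  have hM₂ : frobNorm (M - coordSelection Sset * ((coordSelection Sset)ᵀ * M)) ^ 2
      ≤ δ ^ 2 * frobNorm M ^ 2 := by
    rw [frobNorm_sub_coordSelection_mul_sq]
    refine (Finset.sum_le_sum_of_subset_of_nonneg (Finset.compl_subset_compl.mpr hsub)
      fun _ _ _ => by positivity).trans ?_
    simpa only [M, X, Matrix.mul_assoc] using hsparse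
  have hM : frobNorm M ^ 2 ≤ σmin⁻¹ ^ 2 * frobNorm X ^ 2 :=
    frobNorm_mul_sq_le_of_mulVec (hCd.sum_sq_mulVec_le hσpos hσ) X
  rw [← frobNorm_neg, neg_sub, hZ, ← Matrix.mul_assoc (Φ' * Φ'ᵀ), ← Matrix.mul_assoc (Φ'' * Φ''ᵀ),
    ← Matrix.sub_mul, proj_sub_proj_mul_eq hCd _ hΦ' hΦ'' hr' hr'' X]
  calc _ ≤ matOpNorm C ^ 2 * (δ ^ 2 * frobNorm M ^ 2) :=
        (frobNorm_one_sub_mul_mul_mul_sq_le (isSymm_mul_transpose Φ'')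
          (isIdempotentElem_mul_transpose hΦ'') C _
          (isIdempotentElem_gram_of_sqrt hS W hWSW hAd)).trans (by gcongr)
    _ ≤ matOpNorm C ^ 2 * (δ ^ 2 * (σmin⁻¹ ^ 2 * frobNorm X ^ 2)) := by gcongr
    _ = δ ^ 2 * (matOpNorm C / σmin) ^ 2 * frobNorm X ^ 2 := by ring

/-- Under approximate sparsity of channels (the rows of `C† D Sg^{1/2}` outside `S0` carry
at most a `δ²` fraction of its squared Frobenius norm) and `S0 ⊆ Sset`, the bias gap between
structured sparse fine-tuning (projection `Φ''Φ''ᵀ` onto the column space of `C U_S`) and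
full fine-tuning of the layer (projection `Φ'Φ'ᵀ` onto the column space of `C`) satisfies
`‖Φ''Φ''ᵀ D Sg Wᵀ A† − Φ'Φ'ᵀ D Sg Wᵀ A†‖_F² ≤ δ² κ*²(C) ‖D Sg^{1/2}‖_F²`, where
`κ*(C) = ‖C‖_op / σmin` and `σmin` is the smallest positive singular value of `C`. -/
theorem sparse_bias_bound (q m k p s : ℕ)
    (C : Matrix (Fin q) (Fin m) ℝ) (Cd : Matrix (Fin m) (Fin q) ℝ) (hCd : IsMP C Cd)
    (D : Matrix (Fin q) (Fin p) ℝ) (W : Matrix (Fin k) (Fin p) ℝ)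
    (Sg : Matrix (Fin p) (Fin p) ℝ) (hS : Sg.PosSemidef)
    (hWSW : (W * Sg * Wᵀ).PosSemidef)
    (Ad : Matrix (Fin k) (Fin k) ℝ) (hAd : IsMP hWSW.sqrt Ad)
    (S0 Sset : Finset (Fin m)) (hcard : S0.card ≤ s) (hsub : S0 ⊆ Sset)
    (δ : ℝ) (hδ : 0 < δ)
    (hsparse : ∑ a ∈ S0ᶜ, ∑ j, ((Cd * D * hS.sqrt) a j) ^ 2
        ≤ δ ^ 2 * frobNorm (Cd * D * hS.sqrt) ^ 2)
    (US : Matrix (Fin m) {a // a ∈ Sset} ℝ)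
    (hUS : US = Matrix.of fun i (j : {a // a ∈ Sset}) => if i = j.1 then (1 : ℝ) else 0)
    (t1 t2 : ℕ)
    (Φ'' : Matrix (Fin q) (Fin t1) ℝ) (Φ' : Matrix (Fin q) (Fin t2) ℝ)
    (hΦ'' : Φ''ᵀ * Φ'' = 1) (hΦ' : Φ'ᵀ * Φ' = 1)
    (hr'' : LinearMap.range Φ''.mulVecLin = LinearMap.range (C * US).mulVecLin)
    (hr' : LinearMap.range Φ'.mulVecLin = LinearMap.range C.mulVecLin)
    (σmin : ℝ) (hσpos : 0 < σmin)
    (hσ : ∀ u : Fin q → ℝ,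
      σmin * Real.sqrt (∑ i, (Cᵀ.mulVec u) i ^ 2)
        ≤ Real.sqrt (∑ i, (C.mulVec (Cᵀ.mulVec u)) i ^ 2)) :
    frobNorm (Φ'' * Φ''ᵀ * (D * Sg * Wᵀ * Ad) - Φ' * Φ'ᵀ * (D * Sg * Wᵀ * Ad)) ^ 2
      ≤ δ ^ 2 * (matOpNorm C / σmin) ^ 2 * frobNorm (D * hS.sqrt) ^ 2 :=
  sparse_bias_bound_general q m k p C Cd hCd D W Sg hS hWSW Ad hAd S0 Sset hsub δ hsparse US hUS t1
    t2 Φ'' Φ' hΦ'' hΦ' hr'' hr' σmin hσpos hσ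
end

section
/- Let A, Â be symmetric positive semidefinite matrices in ℝ^{k×k} with rank(Â) = rank(A) and ‖Â − A‖_op ≤ λ_*(A)/2, where λ_*(A) is the smallest positive eigenvalue of A. Then ‖Â† − A†‖_op ≤ C (‖Â − A‖_op) / λ_*(A)² for a universal constant C. -/
/-!
Write `λ = λ_*(A)`, `S = A†`, `Ŝ = Â†`, `ε = ‖Â - A‖`, and let `P = A S`, `Q = Â Ŝ` be the
orthogonal projections onto the ranges. The identity
  `Ŝ - S = Ŝ (A - Â) S + Ŝ Q (1 - P) - (1 - Q) P S`
reduces the claim to bounds on `‖S‖`, `‖Ŝ‖` and on the two angles `‖(1 - Q) P‖`, `‖(1 - P) Q‖`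
between the ranges. Since `⟪x, A x⟫ ≥ λ ‖x‖²` on the range of `A`, `‖S‖ ≤ 1 / λ`, and
`(1 - Q) P = (1 - Q) (A - Â) S` then has norm at most `ε / λ ≤ 1 / 2`. As the ranges have the
same dimension, `Q` maps the range of `P` onto the range of `Q`, which transfers this bound to
`‖(1 - P) Q‖ ≤ 2 ε / λ`. So vectors in the range of `Â` are close to the range of `A`, whence
`⟪x, Â x⟫ ≥ λ / 6 ‖x‖²` there and `‖Ŝ‖ ≤ 6 / λ`. Altogether `‖Ŝ - S‖ ≤ 19 ε / λ²`.
-/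

open Matrix

/-- Smallest positive eigenvalue of a PSD matrix. -/
noncomputable def lamStar {k : ℕ} {A : Matrix (Fin k) (Fin k) ℝ}
    (hA : A.PosSemidef) : ℝ :=
  sInf {t : ℝ | 0 < t ∧ ∃ i, hA.1.eigenvalues i = t}

open scoped InnerProductSpace

structure IsMoorePenroseInverse {R : Type*} [Mul R] [Star R] (a b : R) : Prop where
  mul_mul_self : a * b * a = a
  mul_mul_self' : b * a * b = b
  isSelfAdjoint_mul : IsSelfAdjoint (a * b)
  isSelfAdjoint_mul' : IsSelfAdjoint (b * a)

namespace IsMoorePenroseInverse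

section Monoid

variable {R : Type*} [Monoid R] [StarMul R] {a b c : R}

theorem unique (hb : IsMoorePenroseInverse a b) (hc : IsMoorePenroseInverse a c) : b = c := by
  have hab : a * b = a * c :=
    calc a * b = star (a * c * a * b) := by rw [hc.mul_mul_self, hb.isSelfAdjoint_mul.star_eq]
      _ = a * b * (a * c) := by
        rw [mul_assoc, star_mul, hb.isSelfAdjoint_mul.star_eq, hc.isSelfAdjoint_mul.star_eq]
      _ = a * c := by rw [← mul_assoc, hb.mul_mul_self]
  have hba : b * a = c * a :=
    calc b * a = star (b * (a * c * a)) := by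
          rw [hc.mul_mul_self, hb.isSelfAdjoint_mul'.star_eq]
      _ = c * a * (b * a) := by
        rw [← mul_assoc, ← mul_assoc, mul_assoc (b * a), star_mul,
          hb.isSelfAdjoint_mul'.star_eq, hc.isSelfAdjoint_mul'.star_eq]
      _ = c * a := by rw [mul_assoc c, ← mul_assoc a, hb.mul_mul_self]
  calc b = b * a * b := hb.mul_mul_self'.symm
    _ = c * a * c := by rw [hba, mul_assoc, hab, ← mul_assoc]
    _ = c := hc.mul_mul_self'

theorem star (h : IsMoorePenroseInverse a b) : IsMoorePenroseInverse (star a) (star b) where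
  mul_mul_self := by rw [← star_mul, ← star_mul, ← mul_assoc, h.mul_mul_self]
  mul_mul_self' := by rw [← star_mul, ← star_mul, ← mul_assoc, h.mul_mul_self']
  isSelfAdjoint_mul := by rw [← star_mul]; exact IsSelfAdjoint.star_iff.2 h.isSelfAdjoint_mul'
  isSelfAdjoint_mul' := by rw [← star_mul]; exact IsSelfAdjoint.star_iff.2 h.isSelfAdjoint_mul

theorem map {S F : Type*} [Monoid S] [StarMul S] [FunLike F R S] [MulHomClass F R S]
    [StarHomClass F R S] (f : F) (h : IsMoorePenroseInverse a b) :
    IsMoorePenroseInverse (f a) (f b) where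
  mul_mul_self := by rw [← map_mul, ← map_mul, h.mul_mul_self]
  mul_mul_self' := by rw [← map_mul, ← map_mul, h.mul_mul_self']
  isSelfAdjoint_mul := by rw [← map_mul]; exact h.isSelfAdjoint_mul.map f
  isSelfAdjoint_mul' := by rw [← map_mul]; exact h.isSelfAdjoint_mul'.map f

theorem isStarProjection_mul (h : IsMoorePenroseInverse a b) : IsStarProjection (a * b) where
  isIdempotentElem := by rw [IsIdempotentElem, ← mul_assoc, h.mul_mul_self]
  isSelfAdjoint := h.isSelfAdjoint_mul

theorem isSelfAdjoint (h : IsMoorePenroseInverse a b) (ha : IsSelfAdjoint a) :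
    IsSelfAdjoint b := by
  have h' := h.star
  rw [ha.star_eq] at h'
  exact h'.unique h

theorem commute (h : IsMoorePenroseInverse a b) (ha : IsSelfAdjoint a) : Commute a b :=
  calc a * b = Star.star (a * b) := h.isSelfAdjoint_mul.star_eq.symm
    _ = b * a := by rw [star_mul, (h.isSelfAdjoint ha).star_eq, ha.star_eq]

end Monoid

section Ring

variable {R : Type*} [Ring R] [StarRing R] {a b a' b' : R}

theorem one_sub_mul_mul_eq (h' : IsMoorePenroseInverse a' b') (a b : R) :
    (1 - a' * b') * (a * b) = (1 - a' * b') * (a - a') * b := by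
  have h : (1 - a' * b') * a' = 0 := by rw [sub_mul, one_mul, h'.mul_mul_self, sub_self]
  rw [mul_sub (1 - a' * b') a a', h, sub_zero, mul_assoc]

theorem sub_eq (h : IsMoorePenroseInverse a b) (ha : IsSelfAdjoint a)
    (h' : IsMoorePenroseInverse a' b') (ha' : IsSelfAdjoint a') :
    b' - b = b' * (a - a') * b + b' * (a' * b') * (1 - a * b) - (1 - a' * b') * (a * b) * b := by
  have h₁ : b' * (a' * b') = b' := by rw [← mul_assoc, h'.mul_mul_self']
  have h₂ : a * b * b = b := by rw [(h.commute ha).eq, h.mul_mul_self']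
  have h₃ : b' * a' = a' * b' := (h'.commute ha').eq.symm
  rw [h₁, mul_assoc _ (a * b), h₂, mul_sub, sub_mul, h₃]
  noncomm_ring

end Ring

section CStarRing

variable {R : Type*} [NormedRing R] [StarRing R] [CStarRing R] {a b a' b' : R}

theorem norm_one_sub_mul_mul_le (h' : IsMoorePenroseInverse a' b') (a b : R) :
    ‖(1 - a' * b') * (a * b)‖ ≤ ‖a - a'‖ * ‖b‖ := by
  rw [h'.one_sub_mul_mul_eq, mul_assoc]
  refine (norm_mul_le _ _).trans ?_
  calc ‖1 - a' * b'‖ * ‖(a - a') * b‖ ≤ 1 * (‖a - a'‖ * ‖b‖) := by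
        gcongr
        · exact h'.isStarProjection_mul.one_sub.norm_le
        · exact norm_mul_le _ _
    _ = ‖a - a'‖ * ‖b‖ := one_mul _

theorem norm_sub_le (h : IsMoorePenroseInverse a b) (ha : IsSelfAdjoint a)
    (h' : IsMoorePenroseInverse a' b') (ha' : IsSelfAdjoint a') :
    ‖b' - b‖ ≤ ‖b'‖ * ‖a - a'‖ * ‖b‖ + ‖b'‖ * ‖(1 - a * b) * (a' * b')‖ +
      ‖(1 - a' * b') * (a * b)‖ * ‖b‖ := by
  have hstar : Star.star ((1 - a * b) * (a' * b')) = a' * b' * (1 - a * b) := by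
    rw [star_mul, star_sub, star_one, h.isSelfAdjoint_mul.star_eq, h'.isSelfAdjoint_mul.star_eq]
  rw [h.sub_eq ha h' ha', mul_assoc b' (a' * b'), ← hstar]
  refine (_root_.norm_sub_le _ _).trans
    (add_le_add ((norm_add_le _ _).trans (add_le_add ?_ ?_)) ?_)
  · exact (norm_mul_le _ _).trans (by gcongr; exact norm_mul_le _ _)
  · rw [← norm_star ((1 - a * b) * (a' * b'))]
    exact norm_mul_le _ _
  · exact norm_mul_le _ _

end CStarRing

end IsMoorePenroseInverse

section NormedSpace

variable {E : Type*} [NormedAddCommGroup E] [NormedSpace ℝ E]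

theorem ContinuousLinearMap.opNorm_sq_le_of_norm_sq_le {F : Type*} [NormedAddCommGroup F]
    [NormedSpace ℝ F] {A : E →L[ℝ] F} {K : ℝ} (hK : 0 ≤ K)
    (h : ∀ x, ‖A x‖ ^ 2 ≤ K * ‖x‖ ^ 2) : ‖A‖ ^ 2 ≤ K := by
  have hA : ‖A‖ ≤ √K := A.opNorm_le_bound (Real.sqrt_nonneg K) fun x => by
    rw [← Real.sqrt_sq (norm_nonneg (A x)), ← Real.sqrt_sq (norm_nonneg x), ← Real.sqrt_mul hK]
    exact Real.sqrt_le_sqrt (h x)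
  calc ‖A‖ ^ 2 ≤ √K ^ 2 := pow_le_pow_left₀ (norm_nonneg A) hA 2
    _ = K := Real.sq_sqrt hK

variable [FiniteDimensional ℝ E]

theorem IsIdempotentElem.range_eq_map_of_finrank_eq {P Q : E →L[ℝ] E} (hP : IsIdempotentElem P)
    (hrank : Module.finrank ℝ P.range = Module.finrank ℝ Q.range) (hc : ‖(1 - Q) * P‖ < 1) :
    Q.range = P.range.map (Q : E →ₗ[ℝ] E) := by
  have hinj : Function.Injective ((Q : E →ₗ[ℝ] E).domRestrict P.range) := by
    rw [← LinearMap.ker_eq_bot, LinearMap.ker_eq_bot']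
    rintro ⟨_, x, rfl⟩ hQ
    have hQ : Q (P x) = 0 := hQ
    have hx : ((1 - Q) * P) (P x) = P x := by
      rw [mul_apply_eq_comp, ← mul_apply_eq_comp P P, hP.eq, _root_.sub_apply, one_apply_eq_self,
        hQ, sub_zero]
    have hle := ((1 - Q) * P).le_opNorm (P x)
    rw [hx] at hle
    have : ‖P x‖ = 0 := by nlinarith [norm_nonneg (P x)]
    simpa using this
  refine (Submodule.eq_of_le_of_finrank_eq LinearMap.map_le_range ?_).symm
  rw [← LinearMap.range_domRestrict, LinearMap.finrank_range_of_inj hinj, hrank]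

end NormedSpace

section InnerProductSpace

variable {E : Type*} [NormedAddCommGroup E] [InnerProductSpace ℝ E]

/-- For a nonzero positive semidefinite `T`, the best such `μ` is its smallest positive
eigenvalue. -/
def CoerciveOnRange (T : E →L[ℝ] E) (μ : ℝ) : Prop :=
  ∀ x ∈ T.range, μ * ‖x‖ ^ 2 ≤ ⟪x, T x⟫_ℝ

theorem CoerciveOnRange.mono {T : E →L[ℝ] E} {μ ν : ℝ} (h : CoerciveOnRange T μ) (hνμ : ν ≤ μ) :
    CoerciveOnRange T ν :=
  fun x hx => (mul_le_mul_of_nonneg_right hνμ (sq_nonneg ‖x‖)).trans (h x hx)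

section Complete

variable [CompleteSpace E]

theorem IsStarProjection.norm_apply_le {p : E →L[ℝ] E} (hp : IsStarProjection p) (x : E) :
    ‖p x‖ ≤ ‖x‖ :=
  (p.le_opNorm x).trans (mul_le_of_le_one_left (norm_nonneg x) hp.norm_le)

theorem IsStarProjection.norm_sq_add_norm_one_sub_sq {p : E →L[ℝ] E} (hp : IsStarProjection p)
    (x : E) : ‖p x‖ ^ 2 + ‖(1 - p) x‖ ^ 2 = ‖x‖ ^ 2 := by
  have horth : ⟪p x, (1 - p) x⟫_ℝ = 0 :=
    calc ⟪p x, (1 - p) x⟫_ℝ = ⟪x, (p * (1 - p)) x⟫_ℝ := by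
          rw [← ContinuousLinearMap.adjoint_inner_right, ← ContinuousLinearMap.star_eq_adjoint,
            hp.isSelfAdjoint.star_eq]
          rfl
      _ = 0 := by rw [hp.mul_one_sub_self]; simp
  calc ‖p x‖ ^ 2 + ‖(1 - p) x‖ ^ 2 = ‖p x + (1 - p) x‖ ^ 2 := by
        rw [norm_add_sq_real, horth]; ring
    _ = ‖x‖ ^ 2 := by simp

theorem IsSelfAdjoint.coerciveOnRange_of_orthonormalBasis {ι : Type*} [Fintype ι]
    {T : E →L[ℝ] E} (hT : IsSelfAdjoint T) (b : OrthonormalBasis ι ℝ E) {d : ι → ℝ}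
    (hb : ∀ i, T (b i) = d i • b i) {μ : ℝ} (hμ : ∀ i, d i ≠ 0 → μ ≤ d i) :
    CoerciveOnRange T μ := by
  have hcoord : ∀ i v, ⟪b i, T v⟫_ℝ = d i * ⟪b i, v⟫_ℝ := fun i v => by
    rw [← ContinuousLinearMap.adjoint_inner_left, ← ContinuousLinearMap.star_eq_adjoint,
      hT.star_eq, hb, real_inner_smul_left]
  rintro x ⟨w, hw⟩
  rw [ContinuousLinearMap.coe_coe] at hw
  have hx : ∀ i, d i = 0 → ⟪b i, x⟫_ℝ = 0 := fun i hi => by rw [← hw, hcoord, hi, zero_mul]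
  rw [← b.sum_sq_norm_inner_right, ← b.sum_inner_mul_inner x (T x), Finset.mul_sum]
  refine Finset.sum_le_sum fun i _ => ?_
  rw [hcoord, real_inner_comm (b i) x, Real.norm_eq_abs, sq_abs]
  by_cases hi : d i = 0
  · simp [hx i hi]
  · nlinarith [hμ i hi, sq_nonneg ⟪b i, x⟫_ℝ]

namespace IsMoorePenroseInverse

variable {T S : E →L[ℝ] E}

theorem range_mul_eq (h : IsMoorePenroseInverse T S) : (T * S).range = T.range := by
  refine le_antisymm (LinearMap.range_comp_le_range _ _) ?_
  rintro _ ⟨x, rfl⟩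
  exact ⟨T x, by simp only [ContinuousLinearMap.coe_coe, ← mul_apply_eq_comp, h.mul_mul_self]⟩

theorem norm_le_inv_of_coerciveOnRange (h : IsMoorePenroseInverse T S) (hT : IsSelfAdjoint T)
    {μ : ℝ} (hμ : 0 < μ) (hcoer : CoerciveOnRange T μ) : ‖S‖ ≤ μ⁻¹ := by
  refine S.opNorm_le_bound (inv_nonneg.2 hμ.le) fun z => ?_
  have hS : T * (S * S) = S := by
    rw [← mul_assoc, (h.commute hT).eq, h.mul_mul_self']
  have key : μ * ‖S z‖ ^ 2 ≤ ‖S z‖ * ‖z‖ :=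
    calc μ * ‖S z‖ ^ 2 ≤ ⟪S z, T (S z)⟫_ℝ := hcoer _ ⟨S (S z), DFunLike.congr_fun hS z⟩
      _ ≤ ‖S z‖ * ‖(T * S) z‖ := real_inner_le_norm _ _
      _ ≤ ‖S z‖ * ‖z‖ := by gcongr; exact h.isStarProjection_mul.norm_apply_le z
  rw [inv_mul_eq_div, le_div_iff₀' hμ]
  rcases (norm_nonneg (S z)).eq_or_lt with h0 | hpos
  · rw [← h0, mul_zero]; exact norm_nonneg z
  · nlinarith

theorem mul_norm_mul_apply_sq_le_inner (h : IsMoorePenroseInverse T S) (hT : IsSelfAdjoint T)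
    {μ : ℝ} (hcoer : CoerciveOnRange T μ) (x : E) :
    μ * ‖(T * S) x‖ ^ 2 ≤ ⟪x, T x⟫_ℝ := by
  have hT' : T = T * S * T * (T * S) := by
    rw [h.mul_mul_self, (h.commute hT).eq, ← mul_assoc, h.mul_mul_self]
  calc μ * ‖(T * S) x‖ ^ 2 ≤ ⟪(T * S) x, T ((T * S) x)⟫_ℝ := hcoer _ ⟨S x, rfl⟩
    _ = ⟪x, T x⟫_ℝ := by
      conv_rhs => rw [hT']
      rw [← ContinuousLinearMap.adjoint_inner_right, ← ContinuousLinearMap.star_eq_adjoint,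
        h.isSelfAdjoint_mul.star_eq]
      rfl

end IsMoorePenroseInverse

theorem CoerciveOnRange.perturbation {T T' S S' : E →L[ℝ] E} {μ : ℝ}
    (hcoer : CoerciveOnRange T μ) (hμ : 0 ≤ μ) (hT : IsSelfAdjoint T)
    (hS : IsMoorePenroseInverse T S) (hS' : IsMoorePenroseInverse T' S') :
    CoerciveOnRange T' (μ * (1 - ‖(1 - T * S) * (T' * S')‖ ^ 2) - ‖T' - T‖) := by
  rintro x ⟨w, hw⟩
  rw [ContinuousLinearMap.coe_coe] at hw
  set s := ‖(1 - T * S) * (T' * S')‖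
  have hQx : (T' * S') x = x := by
    rw [← hw, ← mul_apply_eq_comp, hS'.mul_mul_self]
  have hPx : ‖(1 - T * S) x‖ ^ 2 ≤ s ^ 2 * ‖x‖ ^ 2 := by
    rw [← mul_pow]
    refine pow_le_pow_left₀ (norm_nonneg _) ?_ 2
    simpa [hQx] using ((1 - T * S) * (T' * S')).le_opNorm x
  have hpyth := hS.isStarProjection_mul.norm_sq_add_norm_one_sub_sq x
  have hTx := hS.mul_norm_mul_apply_sq_le_inner hT hcoer x
  have hpert : -(‖T' - T‖ * ‖x‖ ^ 2) ≤ ⟪x, (T' - T) x⟫_ℝ := by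
    refine neg_le_of_abs_le ?_
    calc |⟪x, (T' - T) x⟫_ℝ| ≤ ‖x‖ * ‖(T' - T) x‖ := abs_real_inner_le_norm _ _
      _ ≤ ‖x‖ * (‖T' - T‖ * ‖x‖) := by gcongr; exact (T' - T).le_opNorm x
      _ = ‖T' - T‖ * ‖x‖ ^ 2 := by ring
  have hsplit : ⟪x, T' x⟫_ℝ = ⟪x, T x⟫_ℝ + ⟪x, (T' - T) x⟫_ℝ := by
    rw [← inner_add_right, _root_.sub_apply, add_sub_cancel]
  rw [hsplit]
  nlinarith [mul_le_mul_of_nonneg_left hPx hμ]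

end Complete

section FiniteDimensional

variable [FiniteDimensional ℝ E]

theorem IsStarProjection.one_sub_norm_sq_mul_norm_sq_le {P Q : E →L[ℝ] E}
    (hP : IsStarProjection P) (hQ : IsStarProjection Q)
    (hrank : Module.finrank ℝ P.range = Module.finrank ℝ Q.range) :
    (1 - ‖(1 - Q) * P‖ ^ 2) * ‖(1 - P) * Q‖ ^ 2 ≤ ‖(1 - Q) * P‖ ^ 2 := by
  set c := ‖(1 - Q) * P‖
  rcases le_or_gt 1 c with hc | hc
  · exact (mul_nonpos_of_nonpos_of_nonneg (by nlinarith) (sq_nonneg _)).trans (sq_nonneg c)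
  have hc2 : 0 < 1 - c ^ 2 := by nlinarith [norm_nonneg ((1 - Q) * P)]
  suffices ‖(1 - P) * Q‖ ^ 2 ≤ c ^ 2 / (1 - c ^ 2) by rwa [le_div_iff₀' hc2] at this
  refine ContinuousLinearMap.opNorm_sq_le_of_norm_sq_le (by positivity) fun z => ?_
  obtain ⟨_, ⟨w, rfl⟩, hw⟩ : Q z ∈ P.range.map (Q : E →ₗ[ℝ] E) := by
    rw [← hP.isIdempotentElem.range_eq_map_of_finrank_eq hrank hc]
    exact ⟨z, rfl⟩
  have hQy : Q (P w) = Q z := hw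
  have hy : ‖(1 - Q) (P w)‖ ≤ c * ‖P w‖ := by
    simpa [mul_apply_eq_comp, ← mul_apply_eq_comp P P, hP.isIdempotentElem.eq] using
      ((1 - Q) * P).le_opNorm (P w)
  have hdist : ‖((1 - P) * Q) z‖ ≤ c * ‖P w‖ :=
    calc ‖((1 - P) * Q) z‖ = ‖(1 - P) ((1 - Q) (P w))‖ := by
          rw [_root_.sub_apply (1 : E →L[ℝ] E) Q, one_apply_eq_self, hQy, map_sub,
            ← mul_apply_eq_comp (1 - P) P, hP.one_sub_mul_self, _root_.zero_apply, zero_sub,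
            norm_neg, mul_apply_eq_comp]
      _ ≤ c * ‖P w‖ := (hP.one_sub.norm_apply_le _).trans hy
  have hpyth := hQ.norm_sq_add_norm_one_sub_sq (P w)
  rw [hQy] at hpyth
  rw [div_mul_eq_mul_div, le_div_iff₀ hc2]
  calc ‖((1 - P) * Q) z‖ ^ 2 * (1 - c ^ 2) ≤ (c * ‖P w‖) ^ 2 * (1 - c ^ 2) := by gcongr
    _ = c ^ 2 * (‖P w‖ ^ 2 - (c * ‖P w‖) ^ 2) := by ring
    _ ≤ c ^ 2 * (‖P w‖ ^ 2 - ‖(1 - Q) (P w)‖ ^ 2) := by gcongr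
    _ = c ^ 2 * ‖Q z‖ ^ 2 := by rw [← hpyth]; ring
    _ ≤ c ^ 2 * ‖z‖ ^ 2 := by gcongr; exact hQ.norm_apply_le z

theorem IsMoorePenroseInverse.norm_sub_le_of_finrank_range_eq {T T' S S' : E →L[ℝ] E}
    (hT : IsSelfAdjoint T) (hT' : IsSelfAdjoint T')
    (hS : IsMoorePenroseInverse T S) (hS' : IsMoorePenroseInverse T' S')
    (hrank : Module.finrank ℝ T'.range = Module.finrank ℝ T.range) {μ : ℝ} (hμ : 0 < μ)
    (hcoer : CoerciveOnRange T μ) (hε : ‖T' - T‖ ≤ μ / 2) :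
    ‖S' - S‖ ≤ 19 * ‖T' - T‖ / μ ^ 2 := by
  set ε := ‖T' - T‖
  set c := ‖(1 - T' * S') * (T * S)‖
  set s := ‖(1 - T * S) * (T' * S')‖
  have hS_le : ‖S‖ ≤ μ⁻¹ := hS.norm_le_inv_of_coerciveOnRange hT hμ hcoer
  have hc : c ≤ ε / μ := by
    refine (hS'.norm_one_sub_mul_mul_le T S).trans ?_
    rw [norm_sub_rev, div_eq_mul_inv]
    exact mul_le_mul_of_nonneg_left hS_le (norm_nonneg _)
  have hεμ : ε / μ ≤ 1 / 2 := by rwa [div_le_iff₀ hμ, one_div_mul_eq_div]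
  have hs : (1 - c ^ 2) * s ^ 2 ≤ c ^ 2 :=
    hS.isStarProjection_mul.one_sub_norm_sq_mul_norm_sq_le hS'.isStarProjection_mul
      (by rw [hS.range_mul_eq, hS'.range_mul_eq, hrank])
  have hs_sq : 3 / 4 * s ^ 2 ≤ (ε / μ) ^ 2 := by
    have hc0 : 0 ≤ c := norm_nonneg _
    nlinarith [mul_le_mul_of_nonneg_right (pow_le_pow_left₀ hc0 (hc.trans hεμ) 2) (sq_nonneg s),
      pow_le_pow_left₀ hc0 hc 2]
  have hs_le : s ≤ 2 * (ε / μ) := by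
    refine (pow_le_pow_iff_left₀ (norm_nonneg _) (by positivity) two_ne_zero).1 ?_
    nlinarith [sq_nonneg (ε / μ)]
  have hcoer' : CoerciveOnRange T' (μ / 6) :=
    (hcoer.perturbation hμ.le hT hS hS').mono
      (by nlinarith [pow_le_pow_left₀ (by positivity) hεμ 2])
  have hS'_le : ‖S'‖ ≤ 6 / μ := by
    simpa using hS'.norm_le_inv_of_coerciveOnRange hT' (by positivity) hcoer'
  calc ‖S' - S‖ ≤ ‖S'‖ * ‖T - T'‖ * ‖S‖ + ‖S'‖ * s + c * ‖S‖ := hS.norm_sub_le hT hS' hT'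
    _ ≤ 6 / μ * ε * μ⁻¹ + 6 / μ * (2 * (ε / μ)) + ε / μ * μ⁻¹ := by
      rw [norm_sub_rev]
      gcongr
    _ = 19 * ε / μ ^ 2 := by field_simp; ring

end FiniteDimensional

end InnerProductSpace

theorem IsMP.isMoorePenroseInverse {n : Type*} [Fintype n] [DecidableEq n]
    {A B : Matrix n n ℝ} (h : IsMP A B) : IsMoorePenroseInverse A B := by
  obtain ⟨h₁, h₂, h₃, h₄⟩ := h
  simp only [← conjTranspose_eq_transpose_of_trivial, ← star_eq_conjTranspose] at h₃ h₄
  exact ⟨h₁, h₂, h₃, h₄⟩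

section Matrix

variable {k : ℕ}

theorem matOpNorm_eq_norm_toEuclideanCLM (M : Matrix (Fin k) (Fin k) ℝ) :
    matOpNorm M = ‖toEuclideanCLM (n := Fin k) (𝕜 := ℝ) M‖ := rfl

theorem rank_eq_finrank_range_toEuclideanCLM (M : Matrix (Fin k) (Fin k) ℝ) :
    M.rank = Module.finrank ℝ (toEuclideanCLM (n := Fin k) (𝕜 := ℝ) M).range :=
  M.rank_eq_finrank_range_toLin (EuclideanSpace.basisFun (Fin k) ℝ).toBasis
    (EuclideanSpace.basisFun (Fin k) ℝ).toBasis

variable {A : Matrix (Fin k) (Fin k) ℝ}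

theorem lamStar_nonneg (hA : A.PosSemidef) : 0 ≤ lamStar hA :=
  Real.sInf_nonneg fun _ ht => ht.1.le

theorem lamStar_le_eigenvalues (hA : A.PosSemidef) {i : Fin k} (hi : hA.1.eigenvalues i ≠ 0) :
    lamStar hA ≤ hA.1.eigenvalues i :=
  csInf_le ⟨0, fun _ ht => ht.1.le⟩ ⟨(hA.eigenvalues_nonneg i).lt_of_ne' hi, i, rfl⟩

theorem coerciveOnRange_lamStar (hA : A.PosSemidef) :
    CoerciveOnRange (toEuclideanCLM (n := Fin k) (𝕜 := ℝ) A) (lamStar hA) := by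
  refine IsSelfAdjoint.coerciveOnRange_of_orthonormalBasis (d := hA.1.eigenvalues)
    (hA.1.isSelfAdjoint.map _) hA.1.eigenvectorBasis (fun i => ?_)
    (fun _ => lamStar_le_eigenvalues hA)
  apply WithLp.ofLp_injective
  simp [hA.1.mulVec_eigenvectorBasis]

end Matrix

/-- Rank-preserving perturbation bound for pseudoinverses of PSD matrices: there is a
universal constant `Cc` such that whenever `A, Â` are PSD with `rank Â = rank A` and
`‖Â − A‖_op ≤ λ_*(A)/2`, one has `‖Â† − A†‖_op ≤ Cc ‖Â − A‖_op / λ_*(A)²`. -/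
theorem psd_pinv_perturbation :
    ∃ Cc : ℝ, 0 < Cc ∧
      ∀ (k : ℕ) (A Ah : Matrix (Fin k) (Fin k) ℝ)
        (hA : A.PosSemidef) (hAh : Ah.PosSemidef)
        (Ad Ahd : Matrix (Fin k) (Fin k) ℝ),
        IsMP A Ad → IsMP Ah Ahd →
        Ah.rank = A.rank →
        matOpNorm (Ah - A) ≤ lamStar hA / 2 →
        matOpNorm (Ahd - Ad) ≤ Cc * matOpNorm (Ah - A) / lamStar hA ^ 2 := by
  refine ⟨19, by norm_num, fun k A Ah hA hAh Ad Ahd hAd hAhd hrank hε => ?_⟩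
  rcases (lamStar_nonneg hA).eq_or_lt with hzero | hpos
  · obtain rfl : Ah = A := by
      have h0 : matOpNorm (Ah - A) ≤ 0 := hε.trans_eq (by rw [← hzero, zero_div])
      rwa [matOpNorm_eq_norm_toEuclideanCLM, norm_le_zero_iff,
        EmbeddingLike.map_eq_zero_iff, sub_eq_zero] at h0
    simp [hAhd.isMoorePenroseInverse.unique hAd.isMoorePenroseInverse,
      matOpNorm_eq_norm_toEuclideanCLM]
  · simp only [matOpNorm_eq_norm_toEuclideanCLM, map_sub] at hε ⊢
    exact (hAd.isMoorePenroseInverse.map _).norm_sub_le_of_finrank_range_eq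
      (hA.1.isSelfAdjoint.map _) (hAh.1.isSelfAdjoint.map _) (hAhd.isMoorePenroseInverse.map _)
      (by rw [← rank_eq_finrank_range_toEuclideanCLM, ← rank_eq_finrank_range_toEuclideanCLM,
        hrank])
      hpos (coerciveOnRange_lamStar hA) hε
end
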